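/- Let V = iV₂ satisfy Assumption (R) on ℝ and let W_t(x) := V₂(tx)/V₂(t). Then there exist C > 0 and t₀ > 0 such that for all t ≥ t₀, every choice of sign ∓, and every u ∈ C_c^∞(ℝ,ℂ): ‖∓u' + W_t·u‖²_{L²(ℝ)} + ‖u‖²_{L²(ℝ)} ≥ C·(‖u'‖²_{L²(ℝ)} + ‖W_t·u‖²_{L²(ℝ)} + ‖u‖²_{L²(ℝ)}); in particular the constant C is independent of t. -/

import Mathlib

open MeasureTheory Filter

/-- The L² norm over ℝ. -/
noncomputable def L2R (f : ℝ → ℂ) : ℝ :=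
  (eLpNorm f 2 volume).toReal

/-- The Japanese bracket ⟨x⟩ = √(1+x²). -/
noncomputable def jbr (x : ℝ) : ℝ := Real.sqrt (1 + x ^ 2)

/-- The Fourier transform 𝓕u(ξ) = (2π)^{−1/2} ∫ e^{−iξx} u(x) dx. -/
noncomputable def FT (u : ℝ → ℂ) (ξ : ℝ) : ℂ :=
  (Real.sqrt (2 * Real.pi) : ℂ)⁻¹ * ∫ x : ℝ, Complex.exp (-(Complex.I * (ξ : ℂ) * (x : ℂ))) * u x

/-- The inverse Fourier transform 𝓕⁻¹u(x) = (2π)^{−1/2} ∫ e^{ixξ} u(ξ) dξ. -/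
noncomputable def IFT (u : ℝ → ℂ) (x : ℝ) : ℂ :=
  (Real.sqrt (2 * Real.pi) : ℂ)⁻¹ * ∫ ξ : ℝ, Complex.exp (Complex.I * (x : ℂ) * (ξ : ℂ)) * u ξ

/-- ι(t) = sup_x |(1+W_t(x))⁻¹ − (1+|x|^β)⁻¹| where W_t(x) = V₂(tx)/V₂(t). -/
noncomputable def iotaR (V₂ : ℝ → ℝ) (β t : ℝ) : ℝ :=
  ⨆ x : ℝ, |(1 + V₂ (t * x) / V₂ t)⁻¹ - (1 + |x| ^ β)⁻¹|

/-- κ_β = inf over nonzero C_c^∞ φ of ‖−φ' + |x|^β φ‖/‖φ‖, the reciprocal of the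
norm of the inverse of the generalised Airy operator A_β = −∂ₓ + |x|^β. -/
noncomputable def airyBetaInvNorm (β : ℝ) : ℝ :=
  sInf { c : ℝ | ∃ φ : ℝ → ℂ, ContDiff ℝ (⊤ : ℕ∞) φ ∧ HasCompactSupport φ ∧ φ ≠ 0 ∧
    c = L2R (fun x => -(deriv φ x) + Complex.ofReal (|x| ^ β) * φ x) / L2R φ }

/-- Assumption (R): V = iV₂ with V₂ : ℝ → [0,∞) smooth, even, eventually increasing,
regularly varying of index β > 0, with controlled derivatives. -/
structure AssumptionR (V₂ : ℝ → ℝ) (β : ℝ) : Prop where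
  beta_pos : 0 < β
  nonneg : ∀ x, 0 ≤ V₂ x
  smooth : ContDiff ℝ (⊤ : ℕ∞) V₂
  even : ∀ x, V₂ (-x) = V₂ x
  eventually_incr : ∃ x₀ > 0, ∀ x > x₀, 0 < deriv V₂ x
  reg_var : ∀ x > 0, Tendsto (fun t => V₂ (t * x) / V₂ t) atTop (nhds (|x| ^ β))
  controlled_derivs : ∀ n : ℕ, 1 ≤ n → ∃ C > 0, ∀ x : ℝ,
      |iteratedDeriv n V₂ x| ≤ C * (1 + V₂ x) / jbr x ^ n

open Set Topology
open scoped InnerProductSpace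

/-!
Expanding the square and integrating by parts,
`‖±u' + W u‖² = ‖u'‖² + ‖W u‖² ∓ ∫ W' |u|²`, so it suffices to bound the cross term by half of
`‖u'‖² + ‖W u‖²` plus a multiple of `‖u‖²`, uniformly in `t`. On a fixed interval `[-δ, δ]` we use
`sup |u|² ≤ ½‖u'‖² + 2‖u‖²` together with `∫_{-δ}^{δ} |W_t'| ≤ 1`: since `V₂` is even and increasing
near infinity, this integral is at most `o(1) + 2 W_t(δ) → 2 δ^β`, which is small for small `δ`.
Away from `[-δ, δ]`, the derivative bound of Assumption (R) with `⟨tx⟩ ≥ tδ` gives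
`|W_t'| ≤ (C₁/δ)(1 + W_t) ≤ W_t²/2 + K`.
-/

lemma L2R_sq {f : ℝ → ℂ} (hf : Continuous f) (hs : HasCompactSupport f) :
    L2R f ^ 2 = ∫ x, ‖f x‖ ^ 2 := by
  rw [L2R, (hf.memLp_of_hasCompactSupport hs).eLpNorm_eq_integral_rpow_norm two_ne_zero
    ENNReal.ofNat_ne_top, ENNReal.toReal_ofReal (by positivity), ← Real.rpow_natCast,
    ← Real.rpow_mul (integral_nonneg fun x => by positivity)]
  norm_num

lemma integral_mul_deriv_eq_neg_integral_deriv_mul {W g : ℝ → ℝ} (hW : ContDiff ℝ 1 W)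
    (hg : ContDiff ℝ 1 g) (hs : HasCompactSupport g) :
    ∫ x, W x * deriv g x = -∫ x, deriv W x * g x := by
  have hWd := hW.continuous_deriv le_rfl
  have hgd := hg.continuous_deriv le_rfl
  refine integral_mul_deriv_eq_deriv_mul_of_integrable
    (fun x _ => (hW.differentiable one_ne_zero x).hasDerivAt)
    (fun x _ => (hg.differentiable one_ne_zero x).hasDerivAt) ?_ ?_ ?_
  · exact (hW.continuous.mul hgd).integrable_of_hasCompactSupport hs.deriv.mul_left
  · exact (hWd.mul hg.continuous).integrable_of_hasCompactSupport hs.mul_left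
  · exact (hW.continuous.mul hg.continuous).integrable_of_hasCompactSupport hs.mul_left

section
variable {u : ℝ → ℂ}

lemma hasCompactSupport_sq_norm (hs : HasCompactSupport u) :
    HasCompactSupport (fun x => ‖u x‖ ^ 2) :=
  hs.comp_left (g := fun z : ℂ => ‖z‖ ^ 2) (by simp)

lemma deriv_sq_norm (hu : Differentiable ℝ u) (x : ℝ) :
    deriv (fun y => ‖u y‖ ^ 2) x = 2 * ⟪u x, deriv u x⟫_ℝ :=
  (hu x).hasDerivAt.norm_sq.deriv

lemma integrable_sq_norm (hu : Continuous u) (hs : HasCompactSupport u) :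
    Integrable (fun x => ‖u x‖ ^ 2) :=
  (hu.norm.pow 2).integrable_of_hasCompactSupport (hasCompactSupport_sq_norm hs)

lemma sq_norm_le_integral (hu : ContDiff ℝ 1 u) (hs : HasCompactSupport u) (x : ℝ) :
    ‖u x‖ ^ 2 ≤ (1 / 2) * (∫ y, ‖deriv u y‖ ^ 2) + 2 * ∫ y, ‖u y‖ ^ 2 := by
  have hud := hu.continuous_deriv le_rfl
  have hint : Integrable (fun y => (1 / 2) * ‖deriv u y‖ ^ 2 + 2 * ‖u y‖ ^ 2) :=
    ((integrable_sq_norm hud hs.deriv).const_mul _).add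
      ((integrable_sq_norm hu.continuous hs).const_mul _)
  have hderiv :
      ∀ y, deriv (fun y => ‖u y‖ ^ 2) y ≤ (1 / 2) * ‖deriv u y‖ ^ 2 + 2 * ‖u y‖ ^ 2 := by
    intro y
    rw [deriv_sq_norm (hu.differentiable one_ne_zero)]
    nlinarith [real_inner_le_norm (u y) (deriv u y), sq_nonneg (‖deriv u y‖ - 2 * ‖u y‖)]
  have hg : ContDiff ℝ 1 (fun y => ‖u y‖ ^ 2) := hu.norm_sq ℝ
  calc ‖u x‖ ^ 2 = ∫ y in Iic x, deriv (fun y => ‖u y‖ ^ 2) y :=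
        ((hasCompactSupport_sq_norm hs).integral_Iic_deriv_eq hg x).symm
    _ ≤ ∫ y in Iic x, ((1 / 2) * ‖deriv u y‖ ^ 2 + 2 * ‖u y‖ ^ 2) :=
        setIntegral_mono ((hg.continuous_deriv le_rfl).integrable_of_hasCompactSupport
          (hasCompactSupport_sq_norm hs).deriv).integrableOn hint.integrableOn hderiv
    _ ≤ ∫ y, ((1 / 2) * ‖deriv u y‖ ^ 2 + 2 * ‖u y‖ ^ 2) :=
        setIntegral_le_integral hint (ae_of_all _ fun y => by positivity)
    _ = _ := by
        rw [integral_add ((integrable_sq_norm hud hs.deriv).const_mul _)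
          ((integrable_sq_norm hu.continuous hs).const_mul _), integral_const_mul,
          integral_const_mul]
end

lemma sq_norm_ofReal_mul_add_ofReal_mul (s w : ℝ) (a b : ℂ) :
    ‖(s : ℂ) * a + (w : ℂ) * b‖ ^ 2 =
      s ^ 2 * ‖a‖ ^ 2 + ‖(w : ℂ) * b‖ ^ 2 + s * (w * (2 * ⟪b, a⟫_ℝ)) := by
  rw [← Complex.real_smul, ← Complex.real_smul, norm_add_sq_real, norm_smul,
    real_inner_smul_left, real_inner_smul_right, real_inner_comm, Real.norm_eq_abs]
  ring_nf
  rw [sq_abs]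
  ring

section
variable {W : ℝ → ℝ} {u : ℝ → ℂ}

lemma integral_sq_norm_ofReal_mul_deriv_add (hW : ContDiff ℝ 1 W) (hu : ContDiff ℝ 1 u)
    (hs : HasCompactSupport u) (s : ℝ) :
    ∫ x, ‖(s : ℂ) * deriv u x + (W x : ℂ) * u x‖ ^ 2 =
      s ^ 2 * (∫ x, ‖deriv u x‖ ^ 2) + (∫ x, ‖(W x : ℂ) * u x‖ ^ 2) -
        s * ∫ x, deriv W x * ‖u x‖ ^ 2 := by
  have hud := hu.continuous_deriv le_rfl
  have hWu : Continuous fun x => (W x : ℂ) * u x :=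
    (Complex.continuous_ofReal.comp hW.continuous).mul hu.continuous
  have hcross : ∫ x, W x * (2 * ⟪u x, deriv u x⟫_ℝ) = -∫ x, deriv W x * ‖u x‖ ^ 2 := by
    simp_rw [← deriv_sq_norm (hu.differentiable one_ne_zero)]
    exact integral_mul_deriv_eq_neg_integral_deriv_mul hW (hu.norm_sq ℝ)
      (hasCompactSupport_sq_norm hs)
  have hint : Integrable fun x => W x * (2 * ⟪u x, deriv u x⟫_ℝ) := by
    refine Continuous.integrable_of_hasCompactSupport (by fun_prop) ?_
    exact (hs.mono' fun x hx => subset_tsupport u fun h0 => hx (by simp [h0])).mul_left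
  simp_rw [sq_norm_ofReal_mul_add_ofReal_mul]
  have hA := (integrable_sq_norm hud hs.deriv).const_mul (s ^ 2)
  have hB := integrable_sq_norm hWu hs.mul_left
  rw [integral_add (f := fun x => s ^ 2 * ‖deriv u x‖ ^ 2 + ‖(W x : ℂ) * u x‖ ^ 2)
      (hA.add hB) (hint.const_mul s), integral_add hA hB, integral_const_mul,
    integral_const_mul, hcross]
  ring

lemma abs_integral_deriv_mul_sq_norm_le {S : Set ℝ} {K : ℝ} (hW : ContDiff ℝ 1 W)
    (hS : IsCompact S) (hK : 0 ≤ K) (hloc : ∫ x in S, |deriv W x| ≤ 1)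
    (hout : ∀ x ∉ S, |deriv W x| ≤ W x ^ 2 / 2 + K)
    (hu : ContDiff ℝ 1 u) (hs : HasCompactSupport u) :
    |∫ x, deriv W x * ‖u x‖ ^ 2| ≤
      (1 / 2) * (∫ x, ‖deriv u x‖ ^ 2) + 2 * (∫ x, ‖u x‖ ^ 2) +
        (1 / 2) * (∫ x, ‖(W x : ℂ) * u x‖ ^ 2) + K * ∫ x, ‖u x‖ ^ 2 := by
  set M := (1 / 2) * (∫ x, ‖deriv u x‖ ^ 2) + 2 * ∫ x, ‖u x‖ ^ 2
  have hWd := hW.continuous_deriv le_rfl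
  have hM : 0 ≤ M := by positivity
  have hsup : ∀ x, ‖u x‖ ^ 2 ≤ M := sq_norm_le_integral hu hs
  have hptwise : ∀ x, |deriv W x * ‖u x‖ ^ 2| ≤
      S.indicator (fun x => |deriv W x| * M) x + (W x ^ 2 / 2 + K) * ‖u x‖ ^ 2 := by
    intro x
    rw [abs_mul, abs_of_nonneg (by positivity : (0 : ℝ) ≤ ‖u x‖ ^ 2)]
    by_cases hx : x ∈ S
    · rw [indicator_of_mem hx]
      have := mul_le_mul_of_nonneg_left (hsup x) (abs_nonneg (deriv W x))
      have : 0 ≤ (W x ^ 2 / 2 + K) * ‖u x‖ ^ 2 := by positivity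
      linarith
    · rw [indicator_of_notMem hx, zero_add]
      gcongr
      exact hout x hx
  have hloc_int : Integrable (S.indicator fun x => |deriv W x| * M) :=
    ((hWd.abs.mul continuous_const).continuousOn.integrableOn_compact hS).integrable_indicator
      hS.measurableSet
  have hout_int : Integrable fun x => (W x ^ 2 / 2 + K) * ‖u x‖ ^ 2 :=
    (Continuous.integrable_of_hasCompactSupport (by fun_prop)
      (hasCompactSupport_sq_norm hs).mul_left)
  have hWu : ∀ x, ‖(W x : ℂ) * u x‖ ^ 2 = W x ^ 2 * ‖u x‖ ^ 2 := fun x => by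
    rw [norm_mul, Complex.norm_real, Real.norm_eq_abs, mul_pow, sq_abs]
  calc |∫ x, deriv W x * ‖u x‖ ^ 2| ≤ ∫ x, |deriv W x * ‖u x‖ ^ 2| :=
        abs_integral_le_integral_abs
    _ ≤ ∫ x, (S.indicator (fun x => |deriv W x| * M) x + (W x ^ 2 / 2 + K) * ‖u x‖ ^ 2) :=
        integral_mono (Continuous.integrable_of_hasCompactSupport (by fun_prop)
          (hasCompactSupport_sq_norm hs).mul_left).abs (hloc_int.add hout_int) hptwise
    _ = (∫ x in S, |deriv W x|) * M + ((1 / 2) * (∫ x, ‖(W x : ℂ) * u x‖ ^ 2) +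
          K * ∫ x, ‖u x‖ ^ 2) := by
        simp_rw [hWu]
        have hsplit : ∀ x, (W x ^ 2 / 2 + K) * ‖u x‖ ^ 2 =
            (1 / 2) * (W x ^ 2 * ‖u x‖ ^ 2) + K * ‖u x‖ ^ 2 := fun x => by ring
        have hW2 : Integrable fun x => W x ^ 2 * ‖u x‖ ^ 2 :=
          Continuous.integrable_of_hasCompactSupport (by fun_prop)
            (hasCompactSupport_sq_norm hs).mul_left
        rw [integral_add hloc_int hout_int, integral_indicator hS.measurableSet,
          integral_mul_const]
        simp_rw [hsplit]
        rw [integral_add (hW2.const_mul _) ((integrable_sq_norm hu.continuous hs).const_mul _),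
          integral_const_mul, integral_const_mul]
    _ ≤ 1 * M + ((1 / 2) * (∫ x, ‖(W x : ℂ) * u x‖ ^ 2) + K * ∫ x, ‖u x‖ ^ 2) := by
        gcongr
    _ = _ := by ring
end

theorem graphNorm_le_of_deriv_bound {W : ℝ → ℝ} {S : Set ℝ} {K : ℝ} (hW : ContDiff ℝ 1 W)
    (hS : IsCompact S) (hK : 0 ≤ K) (hloc : ∫ x in S, |deriv W x| ≤ 1)
    (hout : ∀ x ∉ S, |deriv W x| ≤ W x ^ 2 / 2 + K) {s : ℝ} (hs : |s| = 1) {u : ℝ → ℂ}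
    (hu : ContDiff ℝ 1 u) (hsupp : HasCompactSupport u) :
    1 / (2 * (K + 3)) * (L2R (deriv u) ^ 2 + L2R (fun x => (W x : ℂ) * u x) ^ 2 + L2R u ^ 2) ≤
      L2R (fun x => (s : ℂ) * deriv u x + (W x : ℂ) * u x) ^ 2 + L2R u ^ 2 := by
  have hud := hu.continuous_deriv le_rfl
  have hWu : Continuous fun x => (W x : ℂ) * u x :=
    (Complex.continuous_ofReal.comp hW.continuous).mul hu.continuous
  have hQ := integral_sq_norm_ofReal_mul_deriv_add hW hu hsupp s
  have hcross := abs_integral_deriv_mul_sq_norm_le hW hS hK hloc hout hu hsupp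
  have hs2 : s ^ 2 = 1 := by rw [← sq_abs, hs, one_pow]
  have hsI : s * ∫ x, deriv W x * ‖u x‖ ^ 2 ≤ |∫ x, deriv W x * ‖u x‖ ^ 2| := by
    simpa [abs_mul, hs] using le_abs_self (s * ∫ x, deriv W x * ‖u x‖ ^ 2)
  rw [L2R_sq hud hsupp.deriv, L2R_sq hWu hsupp.mul_left, L2R_sq hu.continuous hsupp,
    L2R_sq (f := fun x => (s : ℂ) * deriv u x + (W x : ℂ) * u x) (by fun_prop)
      (hsupp.deriv.mul_left.add hsupp.mul_left), hQ, hs2]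
  have hQ0 : 0 ≤ ∫ x, ‖(s : ℂ) * deriv u x + (W x : ℂ) * u x‖ ^ 2 :=
    integral_nonneg fun x => by positivity
  rw [hQ, hs2] at hQ0
  have hU : 0 ≤ ∫ x, ‖u x‖ ^ 2 := integral_nonneg fun x => by positivity
  rw [div_mul_eq_mul_div, one_mul, div_le_iff₀ (by positivity)]
  nlinarith

lemma abs_le_jbr (x : ℝ) : |x| ≤ jbr x := Real.abs_le_sqrt (by linarith)

lemma deriv_scaled (V₂ : ℝ → ℝ) (t x : ℝ) :
    deriv (fun x => V₂ (t * x) / V₂ t) x = t * deriv V₂ (t * x) / V₂ t := by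
  rw [deriv_div_const, deriv_comp_mul_left, smul_eq_mul]

lemma integral_abs_deriv_scaled {V₂ : ℝ → ℝ} {t δ : ℝ} (ht : 0 < t) (hδ : 0 ≤ δ) :
    ∫ x in Icc (-δ) δ, |deriv (fun x => V₂ (t * x) / V₂ t) x| =
      (∫ y in -(t * δ)..t * δ, |deriv V₂ y|) / |V₂ t| := by
  rw [integral_Icc_eq_integral_Ioc, ← intervalIntegral.integral_of_le (by linarith)]
  simp_rw [deriv_scaled, abs_div, abs_mul, abs_of_pos ht]
  rw [intervalIntegral.integral_div, intervalIntegral.integral_const_mul,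
    intervalIntegral.integral_comp_mul_left (fun y => |deriv V₂ y|) ht.ne', smul_eq_mul, mul_neg]
  field_simp

namespace AssumptionR

variable {V₂ : ℝ → ℝ} {β : ℝ}

lemma contDiff_scaled (hV : AssumptionR V₂ β) (t : ℝ) :
    ContDiff ℝ 1 (fun x => V₂ (t * x) / V₂ t) := by
  have : ContDiff ℝ 1 V₂ := hV.smooth.of_le (by norm_num)
  fun_prop

lemma deriv_neg (hV : AssumptionR V₂ β) (x : ℝ) : deriv V₂ (-x) = -deriv V₂ x := by
  have h := deriv_comp_neg (f := V₂) (x := -x)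
  simp only [hV.even, neg_neg] at h
  linarith

lemma tendsto_atTop (hV : AssumptionR V₂ β) : Tendsto V₂ atTop atTop := by
  obtain ⟨x₀, -, hincr⟩ := hV.eventually_incr
  have hmono : StrictMonoOn V₂ (Ici x₀) :=
    strictMonoOn_of_deriv_pos (convex_Ici x₀) hV.smooth.continuous.continuousOn
      fun x hx => hincr x (by simpa using hx)
  have heq : (fun t => V₂ (max t x₀)) =ᶠ[atTop] V₂ := by
    filter_upwards [eventually_ge_atTop x₀] with t ht
    rw [max_eq_left ht]
  have hmax : Monotone fun t => V₂ (max t x₀) := fun a b hab =>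
    hmono.monotoneOn (mem_Ici.2 (le_max_right _ _)) (mem_Ici.2 (le_max_right _ _))
      (max_le_max hab le_rfl)
  rcases tendsto_atTop_of_monotone hmax with h | ⟨L, hL⟩
  · exact h.congr' heq
  replace hL := hL.congr' heq
  have hLpos : 0 < L := by
    have hlt : V₂ x₀ < V₂ (x₀ + 1) := hmono self_mem_Ici (by simp) (by linarith)
    have hle : V₂ (x₀ + 1) ≤ L := ge_of_tendsto hL <| by
      filter_upwards [eventually_ge_atTop (x₀ + 1)] with t ht
      exact hmono.monotoneOn (by simp) (by simp; linarith) ht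
    linarith [hV.nonneg x₀]
  -- a finite positive limit would force `V₂ (2t) / V₂ t → 1`, contradicting `2 ^ β > 1`
  have h1 : Tendsto (fun t => V₂ (t * 2) / V₂ t) atTop (𝓝 1) := by
    have h := (hL.comp (tendsto_id.atTop_mul_const two_pos)).div hL hLpos.ne'
    rwa [div_self hLpos.ne'] at h
  have h2 := tendsto_nhds_unique (hV.reg_var 2 two_pos) h1
  rw [abs_two] at h2
  exact absurd h2 (Real.one_lt_rpow one_lt_two hV.beta_pos).ne'

lemma exists_integral_abs_deriv_le (hV : AssumptionR V₂ β) :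
    ∃ C, ∀ᶠ T in atTop, ∫ y in -T..T, |deriv V₂ y| ≤ C + 2 * V₂ T := by
  obtain ⟨x₀, -, hincr⟩ := hV.eventually_incr
  have hV₂' : Continuous (deriv V₂) := hV.smooth.continuous_deriv (by norm_num)
  have hint : ∀ a b : ℝ, IntervalIntegrable (fun y => |deriv V₂ y|) volume a b :=
    fun a b => hV₂'.abs.intervalIntegrable a b
  set a := x₀ + 1
  refine ⟨∫ y in -a..a, |deriv V₂ y|, ?_⟩
  filter_upwards [eventually_ge_atTop a] with T hT
  have hright : ∫ y in a..T, |deriv V₂ y| = V₂ T - V₂ a := by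
    rw [intervalIntegral.integral_congr (g := deriv V₂) fun y hy => abs_of_pos (hincr y ?_)]
    · exact intervalIntegral.integral_deriv_eq_sub
        (fun y _ => hV.smooth.differentiable (by norm_num) y) (hV₂'.intervalIntegrable _ _)
    · rw [uIcc_of_le hT] at hy
      linarith [hy.1]
  have hleft : ∫ y in -T..-a, |deriv V₂ y| = ∫ y in a..T, |deriv V₂ y| := by
    rw [← intervalIntegral.integral_comp_neg]
    simp_rw [hV.deriv_neg, abs_neg]
  rw [← intervalIntegral.integral_add_adjacent_intervals (a := -T) (b := -a) (c := T)
      (hint _ _) (hint _ _),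
    ← intervalIntegral.integral_add_adjacent_intervals (a := -a) (b := a) (c := T)
      (hint _ _) (hint _ _),
    hleft, hright]
  linarith [hV.nonneg a]

lemma exists_integral_abs_deriv_scaled_le_one (hV : AssumptionR V₂ β) :
    ∃ δ > 0, ∀ᶠ t in atTop, ∫ x in Icc (-δ) δ, |deriv (fun x => V₂ (t * x) / V₂ t) x| ≤ 1 := by
  obtain ⟨C, hC⟩ := hV.exists_integral_abs_deriv_le
  set δ := (1 / 4 : ℝ) ^ β⁻¹
  have hδ : 0 < δ := by positivity
  have hδβ : δ ^ β = 1 / 4 := by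
    rw [← Real.rpow_mul (by norm_num), inv_mul_cancel₀ hV.beta_pos.ne', Real.rpow_one]
  have hlim : Tendsto (fun t => C / V₂ t + 2 * (V₂ (t * δ) / V₂ t)) atTop (𝓝 (1 / 2)) := by
    have h := (tendsto_const_nhds (x := C)).div_atTop hV.tendsto_atTop |>.add
      ((hV.reg_var δ hδ).const_mul 2)
    rw [abs_of_pos hδ, hδβ] at h
    convert h using 2
    norm_num
  refine ⟨δ, hδ, ?_⟩
  filter_upwards [eventually_gt_atTop 0, hV.tendsto_atTop.eventually_gt_atTop 0,
    (tendsto_id.atTop_mul_const hδ).eventually hC,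
    hlim.eventually (ge_mem_nhds (by norm_num : (1 / 2 : ℝ) < 1))] with t ht hVt hCt hlt
  rw [integral_abs_deriv_scaled ht hδ.le, abs_of_pos hVt]
  calc _ ≤ (C + 2 * V₂ (t * δ)) / V₂ t := by gcongr; exact hCt
    _ = C / V₂ t + 2 * (V₂ (t * δ) / V₂ t) := by ring
    _ ≤ 1 := hlt

lemma exists_abs_deriv_scaled_le (hV : AssumptionR V₂ β) {δ : ℝ} (hδ : 0 < δ) :
    ∃ K ≥ 0, ∀ᶠ t in atTop, ∀ x ∉ Icc (-δ) δ,
      |deriv (fun x => V₂ (t * x) / V₂ t) x| ≤ (V₂ (t * x) / V₂ t) ^ 2 / 2 + K := by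
  obtain ⟨C₁, hC₁, hbound⟩ := hV.controlled_derivs 1 le_rfl
  simp only [iteratedDeriv_one, pow_one] at hbound
  set c := C₁ / δ
  refine ⟨c + c ^ 2 / 2, by positivity, ?_⟩
  filter_upwards [eventually_gt_atTop 0, hV.tendsto_atTop.eventually_ge_atTop 1]
    with t ht hVt x hx
  have hjbr : t * δ ≤ jbr (t * x) := by
    have hδx : δ ≤ |x| := le_of_not_gt fun h => hx (abs_le.1 h.le)
    calc t * δ ≤ t * |x| := by gcongr
      _ = |t * x| := by rw [abs_mul, abs_of_pos ht]
      _ ≤ jbr (t * x) := abs_le_jbr _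
  set w := V₂ (t * x) / V₂ t
  have hle : |deriv (fun x => V₂ (t * x) / V₂ t) x| ≤ c * (1 + w) := by
    have hVt0 : 0 < V₂ t := by linarith
    rw [deriv_scaled, abs_div, abs_mul, abs_of_pos ht, abs_of_pos hVt0]
    calc t * |deriv V₂ (t * x)| / V₂ t ≤ t * (C₁ * (1 + V₂ (t * x)) / (t * δ)) / V₂ t := by
          have := hV.nonneg (t * x)
          gcongr
          exact (hbound _).trans (div_le_div_of_nonneg_left (by positivity) (by positivity) hjbr)
      _ = c * (1 / V₂ t + w) := by simp only [c, w]; field_simp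
      _ ≤ c * (1 + w) := by
          gcongr
          exact div_le_one_of_le₀ hVt hVt0.le
  nlinarith [sq_nonneg (w - c)]

end AssumptionR

/-- Lemma `lem:St.graphn`: uniform separation of the graph norm of
S_t⁰ = −∂ₓ + W_t and its adjoint ∂ₓ + W_t, with a constant independent of t. -/
theorem statement13 (V₂ : ℝ → ℝ) (β : ℝ) (hV : AssumptionR V₂ β) :
    ∃ C > 0, ∃ t₀ > 0, ∀ t ≥ t₀, ∀ s : ℝ, s = 1 ∨ s = -1 →
      ∀ u : ℝ → ℂ, ContDiff ℝ (⊤ : ℕ∞) u → HasCompactSupport u →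
        C * (L2R (deriv u) ^ 2 +
              L2R (fun x => Complex.ofReal (V₂ (t * x) / V₂ t) * u x) ^ 2 +
              L2R u ^ 2) ≤
          L2R (fun x => Complex.ofReal s * deriv u x +
              Complex.ofReal (V₂ (t * x) / V₂ t) * u x) ^ 2 + L2R u ^ 2 := by
  obtain ⟨δ, hδ, hloc⟩ := hV.exists_integral_abs_deriv_scaled_le_one
  obtain ⟨K, hK, hout⟩ := hV.exists_abs_deriv_scaled_le hδ
  obtain ⟨t₀, ht₀⟩ := (hloc.and hout).exists_forall_of_atTop
  refine ⟨1 / (2 * (K + 3)), by positivity, max t₀ 1, by positivity,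
    fun t ht s hs u hu hsupp => ?_⟩
  obtain ⟨hloc_t, hout_t⟩ := ht₀ t (le_of_max_le_left ht)
  have habs : |s| = 1 := by rcases hs with rfl | rfl <;> simp
  exact graphNorm_le_of_deriv_bound (hV.contDiff_scaled t) isCompact_Icc hK hloc_t hout_t habs
    (hu.of_le (by norm_num)) hsupp
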